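/- arXiv:1601.07717 — 8 statements merged into one kernel-verified Lean document; each statement's English description precedes it below -/
import Mathlib

section
/- Let A be an n×n complex matrix with eigenvalue λ and associated eigenvector x (Ax = λx, x ≠ 0), and let q be any n-dimensional vector. Then the characteristic polynomial of A + x qᵀ equals the characteristic polynomial of A multiplied by (t - λ - qᵀx)/(t - λ); equivalently, the eigenvalues of A + x qᵀ are those of A with λ replaced by λ + qᵀx (counted with multiplicity). -/
open Matrix Polynomial

/-!
Put `M = X·I - A` and `s = X - λ` over `R[X]`. Then `M x = s x`, so `M (x qᵀ) = s (x qᵀ)` and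
`s (M - x qᵀ) = M (s I - x qᵀ)`. Taking determinants gives
`sⁿ det (M - x qᵀ) = det M · sⁿ⁻¹ (s - qᵀx)`, and `s` is monic, hence cancellable.
-/

namespace Matrix

variable {R : Type*} [CommRing R] {n : Type*} [Fintype n] [DecidableEq n]

theorem det_scalar_sub_vecMulVec [Nonempty n] (s : R) (u v : n → R) :
    (scalar n s - vecMulVec u v).det = s ^ (Fintype.card n - 1) * (s - v ⬝ᵥ u) := by
  obtain ⟨k, hk⟩ := Nat.exists_eq_add_one_of_ne_zero (Fintype.card_ne_zero (α := n))
  rw [← eval_charpoly, charpoly_vecMulVec, dotProduct_comm, hk, Nat.add_sub_cancel]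
  simp only [eval_sub, eval_pow, eval_X, eval_smul, smul_eq_mul]
  ring

theorem pow_card_mul_det_sub_vecMulVec {M : Matrix n n R} {x : n → R} {s : R}
    (hMx : M *ᵥ x = s • x) (q : n → R) :
    s ^ Fintype.card n * (M - vecMulVec x q).det = M.det * (scalar n s - vecMulVec x q).det := by
  rw [← det_smul, ← det_mul, Matrix.mul_sub, mul_vecMulVec, hMx, smul_vecMulVec, smul_sub,
    scalar_apply, ← smul_one_eq_diagonal, Matrix.mul_smul, Matrix.mul_one]

theorem det_sub_vecMulVec_mul {M : Matrix n n R} {x : n → R} {s : R} (hs : IsLeftRegular s)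
    (hMx : M *ᵥ x = s • x) (q : n → R) :
    (M - vecMulVec x q).det * s = M.det * (s - q ⬝ᵥ x) := by
  cases isEmpty_or_nonempty n
  · simp
  apply hs.pow (Fintype.card n - 1)
  calc s ^ (Fintype.card n - 1) * ((M - vecMulVec x q).det * s)
      = s ^ Fintype.card n * (M - vecMulVec x q).det := by
        rw [← mul_assoc, mul_right_comm, ← pow_succ, Nat.sub_add_cancel Fintype.card_pos]
    _ = s ^ (Fintype.card n - 1) * (M.det * (s - q ⬝ᵥ x)) := by
      rw [pow_card_mul_det_sub_vecMulVec hMx, det_scalar_sub_vecMulVec]; ring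

theorem charmatrix_add_vecMulVec (A : Matrix n n R) (x q : n → R) :
    charmatrix (A + vecMulVec x q) = charmatrix A - vecMulVec (C ∘ x) (C ∘ q) := by
  ext i j
  simp [charmatrix, vecMulVec_apply, sub_add_eq_sub_sub]

theorem charmatrix_mulVec_of_mulVec_eq_smul {A : Matrix n n R} {x : n → R} {lam : R}
    (hAx : A *ᵥ x = lam • x) : charmatrix A *ᵥ (C ∘ x) = (X - C lam) • (C ∘ x) := by
  ext i
  rw [charmatrix, sub_mulVec, RingHom.mapMatrix_apply, Pi.sub_apply, ← RingHom.map_mulVec, hAx]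
  simp [scalar_apply, sub_mul]

theorem charpoly_add_vecMulVec_mul_X_sub_C {A : Matrix n n R} {x : n → R} {lam : R}
    (hAx : A *ᵥ x = lam • x) (q : n → R) :
    (A + vecMulVec x q).charpoly * (X - C lam) = A.charpoly * (X - C (lam + q ⬝ᵥ x)) := by
  rw [charpoly, charmatrix_add_vecMulVec,
    det_sub_vecMulVec_mul (monic_X_sub_C lam).isRegular.left
      (charmatrix_mulVec_of_mulVec_eq_smul hAx),
    ← RingHom.map_dotProduct, sub_sub, ← C_add, charpoly]

end Matrix

theorem brauer_general {n : ℕ} (A : Matrix (Fin n) (Fin n) ℂ) (x q : Fin n → ℂ) (lam : ℂ)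
    (hAx : A.mulVec x = lam • x) :
    (A + vecMulVec x q).charpoly * (X - C lam)
      = A.charpoly * (X - C (lam + q ⬝ᵥ x)) :=
  charpoly_add_vecMulVec_mul_X_sub_C hAx q

/-- Brauer's theorem: the characteristic polynomial of the rank-one update `A + x qᵀ`
equals that of `A` with the eigenvalue `λ` replaced by `λ + qᵀx`. -/
theorem brauer {n : ℕ} (A : Matrix (Fin n) (Fin n) ℂ) (x q : Fin n → ℂ) (lam : ℂ)
    (hx : x ≠ 0) (hAx : A.mulVec x = lam • x) :
    (A + vecMulVec x q).charpoly * (X - C lam)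
      = A.charpoly * (X - C (lam + q ⬝ᵥ x)) :=
  brauer_general A x q lam hAx
end

section
/- With the hypotheses of the previous factorization (G solves B₋₁ + B₀G + B₁G² = 0, K = B₀ + B₁G invertible, R = -B₁K⁻¹), the matrix R satisfies the dual equation R²B₋₁ + RB₀ + B₁ = 0. -/
open Matrix

/-- If `G` solves `Bm1 + B₀G + B₁G² = 0`, `K = B₀ + B₁G` is invertible and `R = -B₁K⁻¹`,
then `R` solves the dual equation `R²Bm1 + RB₀ + B₁ = 0`. -/
theorem dual_equation_solution {n : ℕ}
    (Bm1 B₀ B₁ G K R : Matrix (Fin n) (Fin n) ℂ)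
    (hGsol : Bm1 + B₀ * G + B₁ * G ^ 2 = 0)
    (hKdef : K = B₀ + B₁ * G) (hK : IsUnit K)
    (hRdef : R = -(B₁ * K⁻¹)) :
    R ^ 2 * Bm1 + R * B₀ + B₁ = 0 := by
  have hKinv : K⁻¹ * K = 1 :=
    Matrix.nonsing_inv_mul K ((Matrix.isUnit_iff_isUnit_det K).mp hK)
  have hGsol' : Bm1 + (B₀ * G + B₁ * G ^ 2) = 0 := by rw [← add_assoc]; exact hGsol
  have hBm1 : Bm1 = -(K * G) := by
    rw [eq_neg_of_add_eq_zero_left hGsol', hKdef, add_mul, pow_two, mul_assoc]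
  subst hRdef hBm1 hKdef
  rw [pow_two]
  have h1 : -(B₁ * (B₀ + B₁ * G)⁻¹) * -((B₀ + B₁ * G) * G) = B₁ * G := by
    rw [neg_mul_neg, mul_assoc, ← mul_assoc ((B₀ + B₁ * G)⁻¹), hKinv, one_mul]
  rw [mul_assoc, h1]
  have h2 : -(B₁ * (B₀ + B₁ * G)⁻¹) * (B₁ * G) + -(B₁ * (B₀ + B₁ * G)⁻¹) * B₀
      = -(B₁ * ((B₀ + B₁ * G)⁻¹ * (B₀ + B₁ * G))) := by
    rw [← mul_add, neg_mul, mul_assoc, add_comm (B₁ * G) B₀]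
  rw [h2, hKinv, mul_one, neg_add_cancel]
end

section
/- Let A₋₁, A₀, A₁ be nonnegative n×n matrices and let G be a nonnegative solution of A₋₁ + (A₀-I)G + A₁G² = 0 whose spectral radius equals ρ_G with positive Perron right eigenvector u_G > 0 (G u_G = ρ_G u_G, ρ_G > 0). Set U = A₀ + A₁G. Then U u_G ≤ u_G, hence ρ(U) ≤ 1. -/
open Matrix

/-- The spectral radius of a complex matrix: the supremum of the moduli of its eigenvalues. -/
noncomputable def specRad {n : ℕ} (A : Matrix (Fin n) (Fin n) ℂ) : ℝ :=
  ⨆ μ ∈ spectrum ℂ A, ‖μ‖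

lemma exists_eigvec {n : ℕ} (A : Matrix (Fin n) (Fin n) ℂ) (μ : ℂ) (h : μ ∈ spectrum ℂ A) :
    ∃ x : Fin n → ℂ, x ≠ 0 ∧ A.mulVec x = μ • x := by
  rw [← AlgEquiv.spectrum_eq (Matrix.toLinAlgEquiv' (R := ℂ) (n := Fin n)),
    ← Module.End.hasEigenvalue_iff_mem_spectrum] at h
  obtain ⟨x, hx⟩ := h.exists_hasEigenvector
  refine ⟨x, hx.2, ?_⟩
  simpa using hx.apply_eq_smul

lemma norm_le_one_of_subinv {n : ℕ} (U : Matrix (Fin n) (Fin n) ℝ)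
    (hU : ∀ i j, 0 ≤ U i j) (v : Fin n → ℝ) (hv : ∀ i, 0 < v i)
    (hUv : ∀ i, U.mulVec v i ≤ v i) (μ : ℂ)
    (hμ : μ ∈ spectrum ℂ (U.map Complex.ofReal)) : ‖μ‖ ≤ 1 := by
  obtain ⟨x, hx0, hx⟩ := exists_eigvec _ μ hμ
  -- pick index maximizing ‖x i‖ / v i
  obtain ⟨j, hj⟩ : ∃ j, x j ≠ 0 := by
    by_contra h
    push_neg at h
    exact hx0 (funext fun i => h i)
  have hne : (Finset.univ : Finset (Fin n)).Nonempty := ⟨j, Finset.mem_univ j⟩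
  obtain ⟨i₀, -, hi₀⟩ := Finset.exists_max_image Finset.univ (fun i => ‖x i‖ / v i) hne
  set c : ℝ := ‖x i₀‖ / v i₀ with hc
  have hcpos : 0 < c := lt_of_lt_of_le (div_pos (norm_pos_iff.mpr hj) (hv j))
    (hi₀ j (Finset.mem_univ j))
  have hxle : ∀ i, ‖x i‖ ≤ c * v i := fun i => by
    have := hi₀ i (Finset.mem_univ i)
    rwa [div_le_iff₀ (hv i)] at this
  have hxi₀ : ‖x i₀‖ = c * v i₀ := by
    rw [hc, div_mul_cancel₀ _ (hv i₀).ne']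
  have hxi₀pos : 0 < ‖x i₀‖ := by rw [hxi₀]; exact mul_pos hcpos (hv i₀)
  -- key estimate at i₀
  have key : ‖μ‖ * ‖x i₀‖ ≤ ‖x i₀‖ := by
    have h1 : ‖μ‖ * ‖x i₀‖ = ‖((U.map Complex.ofReal).mulVec x) i₀‖ := by
      rw [hx]; simp [Pi.smul_apply, norm_smul]
    have h2 : ‖((U.map Complex.ofReal).mulVec x) i₀‖ ≤ ∑ k, U i₀ k * ‖x k‖ := by
      rw [mulVec]
      refine (norm_sum_le _ _).trans ?_
      refine Finset.sum_le_sum fun k _ => ?_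
      simp only [map_apply, norm_mul, Complex.norm_real, Real.norm_eq_abs,
        abs_of_nonneg (hU i₀ k)]
      exact le_refl _
    have h3 : ∑ k, U i₀ k * ‖x k‖ ≤ c * (U.mulVec v i₀) := by
      rw [mulVec, dotProduct, Finset.mul_sum]
      refine Finset.sum_le_sum fun k _ => ?_
      calc U i₀ k * ‖x k‖ ≤ U i₀ k * (c * v k) :=
            mul_le_mul_of_nonneg_left (hxle k) (hU i₀ k)
        _ = c * (U i₀ k * v k) := by ring
    have h4 : c * (U.mulVec v i₀) ≤ c * v i₀ :=
      mul_le_mul_of_nonneg_left (hUv i₀) hcpos.le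
    calc ‖μ‖ * ‖x i₀‖ = ‖((U.map Complex.ofReal).mulVec x) i₀‖ := h1
      _ ≤ ∑ k, U i₀ k * ‖x k‖ := h2
      _ ≤ c * (U.mulVec v i₀) := h3
      _ ≤ c * v i₀ := h4
      _ = ‖x i₀‖ := hxi₀.symm
  exact le_of_mul_le_mul_right (by linarith) hxi₀pos

/-- If `G ≥ 0` solves `Am1 + (A₀-1)G + A₁G² = 0` with Perron eigenpair `(ρ_G, u_G)`,
`u_G > 0`, `ρ_G > 0`, then `U = A₀ + A₁G` satisfies `U u_G ≤ u_G` and hence `ρ(U) ≤ 1`. -/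
theorem U_subinvariance {n : ℕ} (Am1 A₀ A₁ G : Matrix (Fin n) (Fin n) ℝ)
    (hAm1 : ∀ i j, 0 ≤ Am1 i j) (hA₀ : ∀ i j, 0 ≤ A₀ i j) (hA₁ : ∀ i j, 0 ≤ A₁ i j)
    (hG : ∀ i j, 0 ≤ G i j) (ρG : ℝ) (uG : Fin n → ℝ)
    (heq : Am1 + (A₀ - 1) * G + A₁ * G ^ 2 = 0)
    (hρ : specRad (G.map Complex.ofReal) = ρG) (hρpos : 0 < ρG)
    (huG : ∀ i, 0 < uG i) (hPerron : G.mulVec uG = ρG • uG) :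
    (∀ i, (A₀ + A₁ * G).mulVec uG i ≤ uG i) ∧
    specRad ((A₀ + A₁ * G).map Complex.ofReal) ≤ 1 := by
  set U := A₀ + A₁ * G with hUdef
  have hUnn : ∀ i j, 0 ≤ U i j := fun i j => by
    simp only [hUdef, Matrix.add_apply]
    have : 0 ≤ (A₁ * G) i j := by
      rw [Matrix.mul_apply]
      exact Finset.sum_nonneg fun k _ => mul_nonneg (hA₁ i k) (hG k j)
    exact add_nonneg (hA₀ i j) this
  -- matrix identity: U * G = G - Am1
  have hUG : U * G = G - Am1 := by
    have : A₀ * G + A₁ * G ^ 2 = G - Am1 := by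
      have h := heq
      rw [sub_mul, one_mul] at h
      rw [eq_sub_iff_add_eq, ← sub_eq_zero, ← h]
      abel
    calc U * G = A₀ * G + A₁ * G ^ 2 := by rw [hUdef, add_mul, mul_assoc, ← pow_two]
      _ = G - Am1 := this
  -- apply to uG
  have hsub : ∀ i, U.mulVec uG i ≤ uG i := by
    intro i
    have h1 : (U * G).mulVec uG = ρG • U.mulVec uG := by
      rw [← mulVec_mulVec, hPerron, mulVec_smul]
    have h2 : (U * G).mulVec uG = ρG • uG - Am1.mulVec uG := by
      rw [hUG, sub_mulVec, hPerron]
    have h3 : ρG • U.mulVec uG = ρG • uG - Am1.mulVec uG := by rw [← h1, h2]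
    have h4 : Am1.mulVec uG i ≥ 0 := by
      rw [mulVec, dotProduct]
      exact Finset.sum_nonneg fun k _ => mul_nonneg (hAm1 i k) (huG k).le
    have h5 : ρG * U.mulVec uG i ≤ ρG * uG i := by
      have := congrFun h3 i
      simp only [Pi.smul_apply, Pi.sub_apply, smul_eq_mul] at this
      linarith
    exact le_of_mul_le_mul_left h5 hρpos
  refine ⟨hsub, ?_⟩
  refine Real.iSup_le (fun μ => Real.iSup_le (fun hμ => ?_) zero_le_one) zero_le_one
  exact norm_le_one_of_subinv U hUnn uG huG hsub μ hμ
end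

section
/- With B(z) = A₋₁ + z(A₀-I) + z²A₁, ξ ≠ 0, u ≠ 0 with B(ξ)u = 0, Q = uvᵀ with vᵀu = 1: det(I + (ξ/(z-ξ))Q) = z/(z-ξ) for all z ≠ ξ, and hence det B_r(z) = (z/(z-ξ)) det B(z) where B_r(z) = A₋₁(I-Q) + z(A₀ + ξA₁Q - I) + z²A₁; in particular the roots of det B_r are those of det B with one root ξ replaced by 0. -/
/-!
Since `B(ξ)u = 0`, the vector `B(z)u = B(z)u - B(ξ)u` carries a factor `z - ξ`, and from this one
checks directly that `B_r(z) = B(z) (I + (ξ/(z-ξ)) u vᵀ)`. The determinant of the rank-one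
perturbation is `1 + (ξ/(z-ξ)) vᵀu = z/(z-ξ)`, and the determinant is multiplicative.
-/

open Matrix

variable {m : Type*} [Fintype m] [DecidableEq m]

theorem Matrix.det_one_add_smul_vecMulVec {R : Type*} [CommRing R] (c : R) (u v : m → R) :
    (1 + c • vecMulVec u v).det = 1 + c * (v ⬝ᵥ u) := by
  rw [← smul_vecMulVec, vecMulVec_eq (Fin 1), det_one_add_replicateCol_mul_replicateRow,
    dotProduct_smul, smul_eq_mul]

section QuadPencil

variable {R K : Type*} [CommRing R] [Field K]

def quadPencil (Am1 A₀ A₁ : Matrix m m R) (z : R) : Matrix m m R :=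
  Am1 + z • (A₀ - 1) + z ^ 2 • A₁

theorem quadPencil_mulVec_sub (Am1 A₀ A₁ : Matrix m m R) (z ξ : R) (u : m → R) :
    quadPencil Am1 A₀ A₁ z *ᵥ u - quadPencil Am1 A₀ A₁ ξ *ᵥ u
      = (z - ξ) • ((A₀ - 1) *ᵥ u + (z + ξ) • A₁ *ᵥ u) := by
  simp only [quadPencil, add_mulVec, smul_mulVec]
  module

theorem rightShift_eq_quadPencil_mul (Am1 A₀ A₁ : Matrix m m K) {ξ z : K} {u : m → K}
    (v : m → K) (hB : quadPencil Am1 A₀ A₁ ξ *ᵥ u = 0) (hz : z ≠ ξ) :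
    Am1 * (1 - vecMulVec u v) + z • (A₀ + ξ • (A₁ * vecMulVec u v) - 1) + z ^ 2 • A₁
      = quadPencil Am1 A₀ A₁ z * (1 + (ξ / (z - ξ)) • vecMulVec u v) := by
  have hshift : (ξ / (z - ξ)) • (quadPencil Am1 A₀ A₁ z *ᵥ u)
      = ξ • ((A₀ - 1) *ᵥ u + (z + ξ) • A₁ *ᵥ u) := by
    rw [← sub_zero (quadPencil Am1 A₀ A₁ z *ᵥ u), ← hB, quadPencil_mulVec_sub, smul_smul,
      div_mul_cancel₀ _ (sub_ne_zero.mpr hz)]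
  have hAm1 : Am1 *ᵥ u = -(ξ • (A₀ - 1) *ᵥ u + ξ ^ 2 • A₁ *ᵥ u) := by
    refine eq_neg_of_add_eq_zero_left ?_
    simpa only [quadPencil, add_mulVec, smul_mulVec, add_assoc] using hB
  rw [mul_add, mul_one, Matrix.mul_smul, mul_vecMulVec (quadPencil Am1 A₀ A₁ z),
    ← smul_vecMulVec, hshift]
  simp only [mul_sub, mul_one, mul_vecMulVec, hAm1, quadPencil, neg_vecMulVec, add_vecMulVec,
    smul_vecMulVec]
  module

end QuadPencil

theorem right_shift_det_general {n : ℕ} (Am1 A₀ A₁ : Matrix (Fin n) (Fin n) ℂ)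
    (ξ : ℂ) (u v : Fin n → ℂ) (huv : v ⬝ᵥ u = 1)
    (hB : Am1.mulVec u + ξ • (A₀ - 1).mulVec u + ξ ^ 2 • A₁.mulVec u = 0)
    (z : ℂ) (hz : z ≠ ξ) :
    (1 + (ξ / (z - ξ)) • vecMulVec u v).det = z / (z - ξ) ∧
    (Am1 * (1 - vecMulVec u v) + z • (A₀ + ξ • (A₁ * vecMulVec u v) - 1)
        + z ^ 2 • A₁).det
      = (z / (z - ξ)) * (Am1 + z • (A₀ - 1) + z ^ 2 • A₁).det := by
  have hdetQ : (1 + (ξ / (z - ξ)) • vecMulVec u v).det = z / (z - ξ) := by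
    rw [det_one_add_smul_vecMulVec, huv, mul_one]
    field_simp [sub_ne_zero.mpr hz]
    ring
  have hBξ : quadPencil Am1 A₀ A₁ ξ *ᵥ u = 0 := by
    simpa only [quadPencil, add_mulVec, smul_mulVec] using hB
  refine ⟨hdetQ, ?_⟩
  rw [rightShift_eq_quadPencil_mul Am1 A₀ A₁ v hBξ hz, det_mul, hdetQ, mul_comm]
  rfl

/-- With `B(ξ)u = 0`, `ξ ≠ 0`, `u ≠ 0`, `Q = uvᵀ`, `vᵀu = 1`:
`det(I + (ξ/(z-ξ))Q) = z/(z-ξ)` and `det B_r(z) = (z/(z-ξ)) det B(z)`,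
where `B_r(z) = Am1(I-Q) + z(A₀ + ξA₁Q - I) + z²A₁`. -/
theorem right_shift_det {n : ℕ} (Am1 A₀ A₁ : Matrix (Fin n) (Fin n) ℂ)
    (ξ : ℂ) (hξ : ξ ≠ 0) (u v : Fin n → ℂ) (hu : u ≠ 0) (huv : v ⬝ᵥ u = 1)
    (hB : Am1.mulVec u + ξ • (A₀ - 1).mulVec u + ξ ^ 2 • A₁.mulVec u = 0)
    (z : ℂ) (hz : z ≠ ξ) :
    (1 + (ξ / (z - ξ)) • vecMulVec u v).det = z / (z - ξ) ∧
    (Am1 * (1 - vecMulVec u v) + z • (A₀ + ξ • (A₁ * vecMulVec u v) - 1)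
        + z ^ 2 • A₁).det
      = (z / (z - ξ)) * (Am1 + z • (A₀ - 1) + z ^ 2 • A₁).det :=
  right_shift_det_general Am1 A₀ A₁ ξ u v huv hB z hz
end

section
/- Let G be an n×n complex matrix with eigenvalue ξ and eigenvector u (Gu = ξu, u ≠ 0), and Q = uvᵀ with vᵀu = 1. Then det(zI - (G - ξQ)) = (z/(z-ξ)) det(zI - G) for z ∉ {ξ}; i.e., the eigenvalues of G - ξQ are those of G with one occurrence of ξ replaced by 0. -/
/-!
For `Q = u vᵀ` the hypotheses give `(G - ξ Q) u = 0`, hence `(G - ξ Q) Q = 0`, and so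
`(z I - (G - ξ Q)) (I - (ξ / z) Q) = z I - G` for `z ≠ 0`; by the matrix determinant lemma
`det (I - (ξ / z) Q) = 1 - ξ / z`. At `z = 0` both sides vanish, `G - ξ Q` being singular.
-/

open Matrix

namespace Matrix

variable {n R : Type*} [Fintype n] [CommRing R]

theorem det_one_sub_smul_vecMulVec [DecidableEq n] (c : R) (u v : n → R) :
    det (1 - c • vecMulVec u v) = 1 - c * (v ⬝ᵥ u) := by
  rw [← smul_vecMulVec, vecMulVec_eq Unit, det_one_sub_mul_comm, det_unique, sub_apply,
    one_apply_eq, replicateRow_mul_replicateCol_apply, dotProduct_smul, smul_eq_mul]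

variable {G : Matrix n n R} {ξ : R} {u v : n → R}

theorem sub_smul_vecMulVec_mulVec_eq_zero (hGu : G *ᵥ u = ξ • u) (huv : v ⬝ᵥ u = 1) :
    (G - ξ • vecMulVec u v) *ᵥ u = 0 := by
  rw [sub_mulVec, smul_mulVec, vecMulVec_mulVec, huv, hGu]
  simp

theorem sub_smul_vecMulVec_mul_vecMulVec_eq_zero (hGu : G *ᵥ u = ξ • u) (huv : v ⬝ᵥ u = 1) :
    (G - ξ • vecMulVec u v) * vecMulVec u v = 0 := by
  rw [mul_vecMulVec, sub_smul_vecMulVec_mulVec_eq_zero hGu huv, zero_vecMulVec]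

theorem sub_sub_smul_vecMulVec_mul_eq [DecidableEq n] (hGu : G *ᵥ u = ξ • u) (huv : v ⬝ᵥ u = 1)
    {c z : R} (hc : c * z = ξ) :
    (z • 1 - (G - ξ • vecMulVec u v)) * (1 - c • vecMulVec u v) = z • 1 - G := by
  have hQ := sub_smul_vecMulVec_mul_vecMulVec_eq_zero hGu huv
  rw [Matrix.mul_sub, Matrix.mul_one, Matrix.mul_smul, Matrix.sub_mul, Matrix.smul_mul,
    Matrix.one_mul, hQ, sub_zero, smul_smul, hc]
  abel

end Matrix

/-- Brauer's theorem specialized: if `Gu = ξu`, `u ≠ 0`, `Q = uvᵀ` with `vᵀu = 1`, then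
`det(zI - (G - ξQ)) = (z/(z-ξ)) det(zI - G)` for `z ≠ ξ`. -/
theorem shifted_eigenvalues {n : ℕ} (G : Matrix (Fin n) (Fin n) ℂ) (ξ : ℂ)
    (u v : Fin n → ℂ) (hu : u ≠ 0) (hGu : G.mulVec u = ξ • u) (huv : v ⬝ᵥ u = 1)
    (z : ℂ) (hz : z ≠ ξ) :
    (z • (1 : Matrix (Fin n) (Fin n) ℂ) - (G - ξ • vecMulVec u v)).det
      = (z / (z - ξ)) * (z • (1 : Matrix (Fin n) (Fin n) ℂ) - G).det := by
  rcases eq_or_ne z 0 with rfl | hz0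
  · have hsing : ((0 : ℂ) • (1 : Matrix (Fin n) (Fin n) ℂ) - (G - ξ • vecMulVec u v)).det = 0 := by
      rw [← exists_mulVec_eq_zero_iff]
      refine ⟨u, hu, ?_⟩
      rw [zero_smul, zero_sub, neg_mulVec, sub_smul_vecMulVec_mulVec_eq_zero hGu huv, neg_zero]
    rw [hsing, zero_div, zero_mul]
  · have hfactor := congrArg det (sub_sub_smul_vecMulVec_mul_eq hGu huv (div_mul_cancel₀ ξ hz0))
    rw [det_mul, det_one_sub_smul_vecMulVec, huv, mul_one] at hfactor
    rw [← hfactor]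
    field_simp [sub_ne_zero.mpr hz]
end

section
/- Let G, R, K be n×n complex matrices with K invertible, ρ(G)ρ(R) < 1, W = Σ_{i=0}^∞ GⁱK⁻¹Rⁱ, and suppose Gu = ξu with u ≠ 0, Q = uvᵀ with vᵀu = 1. Setting G_r = G - ξQ, the series W_r = Σ_{i=0}^∞ G_rⁱ K⁻¹ Rⁱ converges and W_r = W - ξ Q W R. -/
open Matrix

/-!
Because `Q = u vᵀ` is idempotent and `G Q = ξ Q`, the deflated matrix `G_r = G - ξ Q` kills `Q`,
so `G_r² = G_r G` and hence `G_r^(i+1) = G_r Gⁱ = G^(i+1) - ξ Q Gⁱ`. Termwise, the `(i+1)`-st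
summand of `W_r` is the `(i+1)`-st summand of `W` minus `ξ Q (GⁱK⁻¹Rⁱ) R`, and summing gives
`W_r = W - ξ Q W R`. Convergence of `W` itself comes from Gelfand's formula: choosing `r > ρ(G)`,
`s > ρ(R)` with `r s < 1`, eventually `‖Gⁱ‖ ≤ rⁱ` and `‖Rⁱ‖ ≤ sⁱ`, so the series is dominated by a
geometric one.
-/

open Filter Topology NNReal

theorem pow_succ_eq_mul_pow_of_mul_self_eq_mul {M : Type*} [Monoid M] {a b : M}
    (h : a * a = a * b) (n : ℕ) : a ^ (n + 1) = a * b ^ n := by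
  induction n with
  | zero => simp
  | succ n ih => rw [pow_succ', ih, ← mul_assoc, h, mul_assoc, ← pow_succ']

section Deflation

variable {𝕜 A : Type*} [CommRing 𝕜] [Ring A] [Algebra 𝕜 A] {g q : A} {ξ : 𝕜}

theorem sub_smul_pow_succ (hq : IsIdempotentElem q) (hgq : g * q = ξ • q) (n : ℕ) :
    (g - ξ • q) ^ (n + 1) = (g - ξ • q) * g ^ n := by
  refine pow_succ_eq_mul_pow_of_mul_self_eq_mul ?_ n
  have hkills : (g - ξ • q) * q = 0 := by
    rw [sub_mul, hgq, smul_mul_assoc, hq.eq, sub_self]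
  rw [mul_sub, mul_smul_comm, hkills, smul_zero, sub_zero]

theorem HasSum.sub_smul_pow_mul_mul_pow [TopologicalSpace A] [IsTopologicalRing A]
    [ContinuousConstSMul 𝕜 A] (hq : IsIdempotentElem q) (hgq : g * q = ξ • q) {c r w : A}
    (hw : HasSum (fun n ↦ g ^ n * c * r ^ n) w) :
    HasSum (fun n ↦ (g - ξ • q) ^ n * c * r ^ n) (w - ξ • (q * w * r)) := by
  rw [← hasSum_nat_add_iff' 1]
  have hshift := (hasSum_nat_add_iff' 1).mpr hw
  have hcorr := ((hw.mul_left q).mul_right r).const_smul ξ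
  convert hshift.sub hcorr using 1
  · funext n
    rw [sub_smul_pow_succ hq hgq, pow_succ' g n, pow_succ r n]
    simp only [sub_mul, smul_mul_assoc, mul_assoc]
  · simp only [Finset.sum_range_one, pow_zero, one_mul, mul_one]
    abel

end Deflation

section BanachAlgebra

variable {A : Type*} [NormedRing A] [NormedAlgebra ℂ A] [CompleteSpace A]

theorem spectrum.eventually_norm_pow_le {a : A} {r : ℝ≥0} (h : spectralRadius ℂ a < r) :
    ∀ᶠ n : ℕ in atTop, ‖a ^ n‖ ≤ r ^ n := by
  filter_upwards [(pow_nnnorm_pow_one_div_tendsto_nhds_spectralRadius a).eventually_lt_const h,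
    eventually_ge_atTop 1] with n hn hn1
  have hpos : (0 : ℝ) < n := by exact_mod_cast hn1
  rw [one_div, ENNReal.rpow_inv_lt_iff hpos, ENNReal.rpow_natCast, ← ENNReal.coe_pow,
    ENNReal.coe_lt_coe] at hn
  exact_mod_cast hn.le

theorem summable_pow_mul_mul_pow {a b : A} (c : A) {r s : ℝ≥0} (ha : spectralRadius ℂ a < r)
    (hb : spectralRadius ℂ b < s) (hrs : r * s < 1) :
    Summable fun n ↦ a ^ n * c * b ^ n := by
  refine .of_norm_bounded_eventually_nat
    ((summable_geometric_of_lt_one (r * s).coe_nonneg hrs).mul_left ‖c‖) ?_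
  filter_upwards [spectrum.eventually_norm_pow_le ha, spectrum.eventually_norm_pow_le hb]
    with n han hbn
  calc ‖a ^ n * c * b ^ n‖ ≤ ‖a ^ n‖ * ‖c‖ * ‖b ^ n‖ := norm_mul₃_le
    _ ≤ r ^ n * ‖c‖ * s ^ n := by gcongr
    _ = ‖c‖ * ((r * s : ℝ≥0) : ℝ) ^ n := by push_cast; ring

end BanachAlgebra

theorem exists_lt_lt_mul_lt_one {x y : ℝ} (h : x * y < 1) :
    ∃ r s : ℝ, x < r ∧ y < s ∧ r * s < 1 := by
  have hmul : ∀ᶠ p : ℝ × ℝ in 𝓝 (x, y), p.1 * p.2 < 1 :=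
    (continuous_mul.tendsto (x, y)).eventually (eventually_lt_nhds h)
  rw [nhds_prod_eq] at hmul
  obtain ⟨⟨r, s⟩, hrs, hr, hs⟩ :=
    ((hmul.filter_mono (prod_mono nhdsWithin_le_nhds nhdsWithin_le_nhds)).and
      (prod_mem_prod self_mem_nhdsWithin self_mem_nhdsWithin :
        {x' | x < x'} ×ˢ {y' | y < y'} ∈ 𝓝[>] x ×ˢ 𝓝[>] y)).exists
  exact ⟨r, s, hr, hs, hrs⟩

theorem spectralRadius_le_specRad {n : ℕ} (A : Matrix (Fin n) (Fin n) ℂ) :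
    spectralRadius ℂ A ≤ ENNReal.ofReal (specRad A) := by
  refine iSup₂_le fun μ hμ ↦ ?_
  rw [← ENNReal.ofReal_coe_nnreal, coe_nnnorm]
  refine ENNReal.ofReal_le_ofReal (le_ciSup₂ (f := fun μ (_ : μ ∈ spectrum ℂ A) ↦ ‖μ‖) ?_ μ hμ)
  refine (A.finite_spectrum.image norm).bddAbove.mono ?_
  rintro _ ⟨_, ⟨ν, rfl⟩, ⟨hν, rfl⟩⟩
  exact ⟨ν, hν, rfl⟩

theorem specRad_nonneg {n : ℕ} (A : Matrix (Fin n) (Fin n) ℂ) : 0 ≤ specRad A :=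
  Real.iSup_nonneg fun _ ↦ Real.iSup_nonneg fun _ ↦ norm_nonneg _

theorem spectralRadius_lt_of_specRad_lt {n : ℕ} {A : Matrix (Fin n) (Fin n) ℂ} {r : ℝ}
    (h : specRad A < r) : spectralRadius ℂ A < r.toNNReal :=
  (spectralRadius_le_specRad A).trans_lt
    ((ENNReal.ofReal_lt_ofReal_iff ((specRad_nonneg A).trans_lt h)).2 h)

section

-- Summability is norm-independent; this norm only serves to apply Gelfand's formula.
attribute [local instance] Matrix.linftyOpNormedRing Matrix.linftyOpNormedAlgebra

theorem summable_pow_mul_mul_pow_of_specRad_mul_lt_one {n : ℕ} (G R C : Matrix (Fin n) (Fin n) ℂ)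
    (h : specRad G * specRad R < 1) : Summable fun i ↦ G ^ i * C * R ^ i := by
  obtain ⟨r, s, hr, hs, hrs⟩ := exists_lt_lt_mul_lt_one h
  refine summable_pow_mul_mul_pow C (spectralRadius_lt_of_specRad_lt hr)
    (spectralRadius_lt_of_specRad_lt hs) ?_
  rwa [← Real.toNNReal_mul ((specRad_nonneg G).trans hr.le), Real.toNNReal_lt_one]

end

theorem shifted_series_general {n : ℕ} (G R K : Matrix (Fin n) (Fin n) ℂ)
    (hρ : specRad G * specRad R < 1)
    (ξ : ℂ) (u v : Fin n → ℂ) (hGu : G.mulVec u = ξ • u)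
    (huv : v ⬝ᵥ u = 1) :
    Summable (fun i : ℕ => (G - ξ • vecMulVec u v) ^ i * K⁻¹ * R ^ i) ∧
    (∑' i : ℕ, (G - ξ • vecMulVec u v) ^ i * K⁻¹ * R ^ i)
      = (∑' i : ℕ, G ^ i * K⁻¹ * R ^ i)
        - ξ • (vecMulVec u v * (∑' i : ℕ, G ^ i * K⁻¹ * R ^ i) * R) := by
  have hQ : IsIdempotentElem (vecMulVec u v) := by
    rw [IsIdempotentElem, vecMulVec_mul_vecMulVec, huv, one_smul]
  have hGQ : G * vecMulVec u v = ξ • vecMulVec u v := by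
    rw [mul_vecMulVec, hGu, smul_vecMulVec]
  have hW := (summable_pow_mul_mul_pow_of_specRad_mul_lt_one G R K⁻¹ hρ).hasSum
  have hWr := hW.sub_smul_pow_mul_mul_pow hQ hGQ
  exact ⟨hWr.summable, hWr.tsum_eq⟩

/-- With `G_r = G - ξQ`, `Q = uvᵀ`, `Gu = ξu`, `vᵀu = 1`, the series
`W_r = Σ G_rⁱK⁻¹Rⁱ` converges and `W_r = W - ξQWR` where `W = Σ GⁱK⁻¹Rⁱ`. -/
theorem shifted_series {n : ℕ} (G R K : Matrix (Fin n) (Fin n) ℂ) (hK : IsUnit K)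
    (hρ : specRad G * specRad R < 1)
    (ξ : ℂ) (u v : Fin n → ℂ) (hu : u ≠ 0) (hGu : G.mulVec u = ξ • u)
    (huv : v ⬝ᵥ u = 1) :
    Summable (fun i : ℕ => (G - ξ • vecMulVec u v) ^ i * K⁻¹ * R ^ i) ∧
    (∑' i : ℕ, (G - ξ • vecMulVec u v) ^ i * K⁻¹ * R ^ i)
      = (∑' i : ℕ, G ^ i * K⁻¹ * R ^ i)
        - ξ • (vecMulVec u v * (∑' i : ℕ, G ^ i * K⁻¹ * R ^ i) * R) :=
  shifted_series_general G R K hρ ξ u v hGu huv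
end

section
/- Let G, R, K, W be n×n complex matrices with W invertible, W - GWR = K⁻¹, Ĝ := WRW⁻¹, R̂ := W⁻¹GW. Suppose u ≠ 0, v satisfy Gu = ξu, vᵀu = 1, Q = uvᵀ, and ξ·vᵀĜu ≠ 1. Then W_r := W - ξQWR is invertible. -/
/-!
Since `W R = (W R W⁻¹) W`, the matrix `W_r` factors as `(1 - ξ u (vᵀĜ)) W`, a rank-one
perturbation of the identity times `W`; by the matrix determinant lemma its determinant is
`(1 - ξ vᵀĜu) det W ≠ 0`.
-/

open Matrix

namespace Matrix

variable {m α : Type*} [Fintype m] [DecidableEq m]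

theorem det_one_sub_vecMulVec [CommRing α] (u v : m → α) :
    (1 - vecMulVec u v).det = 1 - v ⬝ᵥ u := by
  rw [sub_eq_add_neg, ← vecMulVec_neg, vecMulVec_eq Unit,
    det_one_add_replicateCol_mul_replicateRow, neg_dotProduct, sub_eq_add_neg]

theorem isUnit_one_sub_vecMulVec_iff [Field α] {u v : m → α} :
    IsUnit (1 - vecMulVec u v) ↔ v ⬝ᵥ u ≠ 1 := by
  rw [isUnit_iff_isUnit_det, det_one_sub_vecMulVec, isUnit_iff_ne_zero, sub_ne_zero, ne_comm]

theorem mul_mul_eq_mul_conj_mul [CommRing α] {W : Matrix m m α} (hW : IsUnit W)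
    (X R : Matrix m m α) : X * W * R = X * (W * R * W⁻¹) * W := by
  rw [mul_assoc X, mul_assoc, nonsing_inv_mul_cancel_right _ _ ((isUnit_iff_isUnit_det W).mp hW)]

end Matrix

theorem Wr_invertible_general {n : ℕ} (R W : Matrix (Fin n) (Fin n) ℂ)
    (hW : IsUnit W)
    (ξ : ℂ) (u v : Fin n → ℂ)
    (hcond : ξ * (v ⬝ᵥ (W * R * W⁻¹).mulVec u) ≠ 1) :
    IsUnit (W - ξ • (vecMulVec u v * W * R)) := by
  have hfactor : W - ξ • (vecMulVec u v * W * R)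
      = (1 - vecMulVec (ξ • u) (v ᵥ* (W * R * W⁻¹))) * W := by
    rw [mul_mul_eq_mul_conj_mul hW, vecMulVec_mul, smul_vecMulVec, sub_mul, one_mul,
      smul_mul_assoc]
  rw [hfactor]
  refine (isUnit_one_sub_vecMulVec_iff.mpr ?_).mul hW
  rwa [dotProduct_smul, ← dotProduct_mulVec, smul_eq_mul]

/-- If `W` is invertible, `W - GWR = K⁻¹`, `Ĝ = WRW⁻¹`, `Gu = ξu`, `vᵀu = 1`,
`Q = uvᵀ` and `ξ·vᵀĜu ≠ 1`, then `W_r = W - ξQWR` is invertible. -/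
theorem Wr_invertible {n : ℕ} (G R K W : Matrix (Fin n) (Fin n) ℂ)
    (hK : IsUnit K) (hW : IsUnit W) (hStein : W - G * W * R = K⁻¹)
    (ξ : ℂ) (u v : Fin n → ℂ) (hu : u ≠ 0) (hGu : G.mulVec u = ξ • u)
    (huv : v ⬝ᵥ u = 1)
    (hcond : ξ * (v ⬝ᵥ (W * R * W⁻¹).mulVec u) ≠ 1) :
    IsUnit (W - ξ • (vecMulVec u v * W * R)) :=
  Wr_invertible_general R W hW ξ u v hcond
end

section
/- Suppose φ(z) = z⁻¹B₋₁ + B₀ + zB₁ admits a factorization φ(z) = (I - zR)K(I - z⁻¹G) with K invertible and ρ(G) < 1, ρ(R) < 1, and also admits a factorization φ(z⁻¹) = (I - zR̂)Ŷ(I - z⁻¹Ĝ) with Ŷ invertible, ρ(Ĝ) < 1, ρ(R̂) < 1. Then Ĝ solves B₋₁X² + B₀X + B₁ = 0 and R̂ solves B₋₁ + XB₀ + X²B₁ = 0. -/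
open Matrix

/-- If `φ(z) = z⁻¹Bm1 + B₀ + zB₁` admits a canonical factorization
`φ(z) = (I - zR)K(I - z⁻¹G)` and `φ(z⁻¹)` admits a canonical factorization
`φ(z⁻¹) = (I - zR̂)Ŷ(I - z⁻¹Ĝ)`, then `Ĝ` solves `Bm1X² + B₀X + B₁ = 0`
and `R̂` solves `Bm1 + XB₀ + X²B₁ = 0`. -/
theorem hat_solutions {n : ℕ} (Bm1 B₀ B₁ G R K Gh Rh Y : Matrix (Fin n) (Fin n) ℂ)
    (hK : IsUnit K) (hY : IsUnit Y)
    (hρG : specRad G < 1) (hρR : specRad R < 1)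
    (hρGh : specRad Gh < 1) (hρRh : specRad Rh < 1)
    (hfac : ∀ z : ℂ, z ≠ 0 →
      z⁻¹ • Bm1 + B₀ + z • B₁ = (1 - z • R) * K * (1 - z⁻¹ • G))
    (hfac2 : ∀ z : ℂ, z ≠ 0 →
      z • Bm1 + B₀ + z⁻¹ • B₁ = (1 - z • Rh) * Y * (1 - z⁻¹ • Gh)) :
    Bm1 * Gh ^ 2 + B₀ * Gh + B₁ = 0 ∧ Bm1 + Rh * B₀ + Rh ^ 2 * B₁ = 0 := by
  have h1 := hfac2 1 one_ne_zero
  have h2 := hfac2 (-1) (by norm_num)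
  have h3 := hfac2 2 two_ne_zero
  simp only [sub_mul, mul_sub, one_mul, mul_one, smul_mul_assoc, mul_smul_comm,
    smul_smul] at h1 h2 h3
  norm_num at h1 h2 h3
  have hA : Bm1 = -(Rh * Y) := by
    linear_combination (norm := module) (-(1/2 : ℂ)) • h1 - ((1/6 : ℂ)) • h2 + ((2/3 : ℂ)) • h3
  have hC : B₁ = -(Y * Gh) := by
    linear_combination (norm := module) h1 - ((1/3 : ℂ)) • h2 - ((2/3 : ℂ)) • h3
  have hB : B₀ = Y + Rh * Y * Gh := by
    linear_combination (norm := module) ((1/2 : ℂ)) • h1 + ((1/2 : ℂ)) • h2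
  constructor
  · rw [hA, hB, hC]; noncomm_ring
  · rw [hA, hB, hC]; noncomm_ring
end
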